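/- Consider the family of SL HR grammars G_n (n ≥ 1) with nonterminals A_1,…,A_n of rank 2, start graph S having three vertices 1,2,3 and two A_1-labeled edges with attachments (1,2) and (1,3), each rule A_i → g where g has vertices {1,2,3} with external sequence ext = (2,3), vertex 1 internal, and two A_{i+1}-labeled edges attached (2,3) and (2,1), and the rule for A_n analogous with both edges labeled by the terminal a of rank 2. Then the derivation tree dt(G_n) has exactly 2^n leaves, and the tableaux tab(u) modeling these 2^n leaves u (as defined by the tableau definition) are pairwise distinct; hence the number of distinct tableaux needed to model all leaves grows exponentially in the size of G_n, which is linear in n. -/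

import Mathlib

/-! Formalization of SL HR grammars (straight-line hyperedge replacement grammars),
their derivation trees, traversal, and tableaux data structures. -/

universe u v

/-- A (hyper)graph over a label alphabet `L`: vertices and edges are natural numbers,
`att` gives the attachment sequence of an edge, `lab` its label, and `ext` is the
sequence of external vertices. -/
structure HRHypergraph (L : Type u) where
  V : Finset ℕ
  E : Finset ℕ
  att : ℕ → List ℕ
  lab : ℕ → L
  ext : List ℕ

namespace HRHypergraph

variable {L : Type u}

/-- Well-formedness of a hypergraph with respect to a rank function on labels:
nonempty vertex set, attachments are repetition-free sequences of vertices of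
length equal to the rank of the label (ranks are `≥ 1`), and the external
vertices form a repetition-free sequence of vertices. -/
def WF (rank : L → ℕ) (g : HRHypergraph L) : Prop :=
  g.V.Nonempty ∧
  (∀ e ∈ g.E, ∀ v ∈ g.att e, v ∈ g.V) ∧
  (∀ e ∈ g.E, (g.att e).Nodup) ∧
  (∀ e ∈ g.E, (g.att e).length = rank (g.lab e)) ∧
  (∀ a : L, 1 ≤ rank a) ∧
  (∀ v ∈ g.ext, v ∈ g.V) ∧
  g.ext.Nodup

/-- The rank of a hypergraph is its number of external vertices. -/
def rank (g : HRHypergraph L) : ℕ := g.ext.length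

/-- The vertex-numbered convention: a hypergraph with `n` vertices and `k` external
vertices has `V = {1,…,n}` and `ext = (n-k+1)⋯n`. -/
def VertexNumbered (g : HRHypergraph L) (n : ℕ) : Prop :=
  g.V = Finset.Icc 1 n ∧
  g.ext = (List.range g.ext.length).map (fun i => n - g.ext.length + 1 + i)

/-- A hypergraph is unique-labeled if for every vertex `x`, label `a` and position `i`
there is at most one edge labeled `a` whose `i`-th attached vertex is `x`. -/
def UniqueLabeled (g : HRHypergraph L) : Prop :=
  ∀ (x : ℕ) (a : L) (i : ℕ), ∀ e₁ ∈ g.E, ∀ e₂ ∈ g.E,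
    g.lab e₁ = a → g.lab e₂ = a →
    (g.att e₁)[i]? = some x → (g.att e₂)[i]? = some x → e₁ = e₂

/-- `x` and `y` are `a`-`k`-`l`-neighbors: some `a`-labeled edge has `x` attached
at position `k` and `y` attached at position `l` (positions are 0-based). -/
def Neighbors (g : HRHypergraph L) (a : L) (k l : ℕ) (x y : ℕ) : Prop :=
  ∃ e ∈ g.E, g.lab e = a ∧ (g.att e)[k]? = some x ∧ (g.att e)[l]? = some y

/-- An isomorphism of hypergraphs. -/
structure Iso (g h : HRHypergraph L) where
  vmap : ℕ → ℕ
  emap : ℕ → ℕ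
  vmap_bij : Set.BijOn vmap ↑g.V ↑h.V
  emap_bij : Set.BijOn emap ↑g.E ↑h.E
  att_map : ∀ e ∈ g.E, h.att (emap e) = (g.att e).map vmap
  lab_map : ∀ e ∈ g.E, h.lab (emap e) = g.lab e
  ext_map : h.ext = g.ext.map vmap

def Isomorphic (g h : HRHypergraph L) : Prop := Nonempty (Iso g h)

/-- `res` is (an instance of) the replacement of edge `e` of `g` by (a disjoint copy of)
the graph `h`: `e` is deleted, a renamed copy of `h` is added, the `i`-th external
vertex of the copy is identified with the `i`-th attached vertex of `e`, and the
external vertices of the result are those of `g`. -/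
def IsReplacement (g : HRHypergraph L) (e : ℕ) (h : HRHypergraph L) (res : HRHypergraph L) : Prop :=
  (g.att e).length = h.ext.length ∧
  ∃ (ρ : ℕ → ℕ) (η : ℕ → ℕ),
    Set.InjOn ρ ↑h.V ∧ Set.InjOn η ↑h.E ∧
    (∀ (i x : ℕ), h.ext[i]? = some x → (g.att e)[i]? = some (ρ x)) ∧
    (∀ x ∈ h.V, x ∉ h.ext → ρ x ∉ g.V) ∧
    (∀ f ∈ h.E, η f ∉ g.E) ∧
    res.V = g.V ∪ h.V.image ρ ∧
    res.E = g.E.erase e ∪ h.E.image η ∧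
    (∀ f ∈ g.E.erase e, res.att f = g.att f ∧ res.lab f = g.lab f) ∧
    (∀ f ∈ h.E, res.att (η f) = (h.att f).map ρ ∧ res.lab (η f) = h.lab f) ∧
    res.ext = g.ext

/-- The canonical vertex renaming used in vertex-numbered replacement:
the `i`-th external vertex of `h` is renamed to the `i`-th attached vertex of `e`,
every other (internal) vertex `x` of `h` is renamed to `n + x`. -/
def renameVN (g : HRHypergraph L) (e : ℕ) (h : HRHypergraph L) (n : ℕ) (x : ℕ) : ℕ :=
  if x ∈ h.ext then (g.att e).getD (List.idxOf x h.ext) 0 else n + x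

/-- A fresh edge identifier for `g`. -/
def freshE (g : HRHypergraph L) : ℕ := g.E.sup id + 1

/-- Vertex-numbered replacement `g[e/h]`, where `n` is the number of vertices of `g`:
internal vertices of the copy of `h` are renumbered consecutively from `n+1`. -/
def replaceVN (g : HRHypergraph L) (e : ℕ) (h : HRHypergraph L) (n : ℕ) : HRHypergraph L where
  V := g.V ∪ (h.V.filter (fun x => x ∉ h.ext)).image (fun x => n + x)
  E := g.E.erase e ∪ h.E.image (fun f => freshE g + f)
  att := fun f => if f ∈ g.E.erase e then g.att f
    else (h.att (f - freshE g)).map (renameVN g e h n)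
  lab := fun f => if f ∈ g.E.erase e then g.lab f else h.lab (f - freshE g)
  ext := g.ext

end HRHypergraph

/-- A hyperedge replacement grammar over terminal alphabet `σ` and nonterminal
alphabet `ν`: each symbol has a rank, each nonterminal `A` has exactly one rule
`A → rhs A`, and there is a start hypergraph. -/
structure HRG (σ : Type u) (ν : Type v) where
  rankT : σ → ℕ
  rankN : ν → ℕ
  rhs : ν → HRHypergraph (σ ⊕ ν)
  start : HRHypergraph (σ ⊕ ν)

namespace HRG

variable {σ : Type u} {ν : Type v}

/-- The rank function on the combined label alphabet. -/
def rankL (G : HRG σ ν) : σ ⊕ ν → ℕ := Sum.elim G.rankT G.rankN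

/-- The graph associated with a derivation-tree root: the start graph for `none`,
the right-hand side of `A` for `some A`. -/
def graphOf (G : HRG σ ν) : Option ν → HRHypergraph (σ ⊕ ν)
  | none => G.start
  | some A => G.rhs A

/-- The rank of a derivation-tree root (the start graph has rank 0). -/
def rankO (G : HRG σ ν) : Option ν → ℕ
  | none => 0
  | some A => G.rankN A

/-- Well-formedness of an HR grammar. -/
def WF (G : HRG σ ν) : Prop :=
  (∀ a : σ, 1 ≤ G.rankT a) ∧ (∀ A : ν, 1 ≤ G.rankN A) ∧
  (∀ A : ν, (G.rhs A).WF G.rankL) ∧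
  (∀ A : ν, (G.rhs A).ext.length = G.rankN A) ∧
  G.start.WF G.rankL ∧ G.start.ext = []

/-- `A₁ ≤_NT A₂`: some edge of `rhs A₁` is labeled by the nonterminal `A₂`. -/
def ntStep (G : HRG σ ν) (A B : ν) : Prop :=
  ∃ e ∈ (G.rhs A).E, (G.rhs A).lab e = Sum.inr B

/-- Some edge of the start graph is labeled by the nonterminal `B`. -/
def startStep (G : HRG σ ν) (B : ν) : Prop :=
  ∃ e ∈ G.start.E, G.start.lab e = Sum.inr B

/-- Straight-line restriction: the nonterminal dependency relation is acyclic
(it admits a strictly decreasing rank into `ℕ`), and every nonterminal is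
reachable from the start graph (the DAG is rooted at `S`). -/
def SL (G : HRG σ ν) : Prop :=
  (∃ d : ν → ℕ, ∀ A B : ν, G.ntStep A B → d B < d A) ∧
  (∀ B : ν, ∃ A : ν, G.startStep A ∧ Relation.ReflTransGen G.ntStep A B)

/-- One derivation step: replace some nonterminal edge by the right-hand side of
its rule. -/
def Derives (G : HRG σ ν) (g g' : HRHypergraph (σ ⊕ ν)) : Prop :=
  ∃ e ∈ g.E, ∃ B : ν, g.lab e = Sum.inr B ∧ HRHypergraph.IsReplacement g e (G.rhs B) g'

/-- A graph all of whose edges are labeled by terminals. -/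
def TerminalGraph (g : HRHypergraph (σ ⊕ ν)) : Prop :=
  ∀ e ∈ g.E, ∃ a : σ, g.lab e = Sum.inl a

/-- The language of `G`: all terminal-labeled graphs derivable from the start graph. -/
def Lang (G : HRG σ ν) : Set (HRHypergraph (σ ⊕ ν)) :=
  {g | Relation.ReflTransGen G.Derives G.start g ∧ TerminalGraph g}

/-- Lexicographic comparison of attachment sequences. -/
def listLexLE : List ℕ → List ℕ → Bool
  | [], _ => true
  | _ :: _, [] => false
  | a :: as, b :: bs => if a < b then true else if b < a then false else listLexLE as bs

/-- The derivation order `≤_dt` on edges: lexicographic on attachment sequences,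
ties broken by the fixed linear order on nonterminals. -/
def dtLE [LinearOrder ν] (g : HRHypergraph (σ ⊕ ν)) (e f : ℕ) : Bool :=
  if g.att e = g.att f then
    match g.lab e, g.lab f with
    | Sum.inr B, Sum.inr C => decide (B ≤ C)
    | _, _ => true
  else listLexLE (g.att e) (g.att f)

/-- The nonterminal edges of `g`, listed in the derivation order `≤_dt`. -/
def ntEdgeList [LinearOrder ν] (g : HRHypergraph (σ ⊕ ν)) : List ℕ :=
  ((g.E.filter (fun e => (g.lab e).isRight = true)).sort (· ≤ ·)).mergeSort (dtLE g)

/-- Replace all nonterminal edges of `g`, in derivation order, by `val` of their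
labels, using vertex-numbered replacement. -/
def expandVal (G : HRG σ ν) [LinearOrder ν] (val : ν → HRHypergraph (σ ⊕ ν))
    (g : HRHypergraph (σ ⊕ ν)) : HRHypergraph (σ ⊕ ν) :=
  (ntEdgeList g).foldl (fun acc e =>
    match acc.lab e with
    | Sum.inr B => HRHypergraph.replaceVN acc e (val B) acc.V.card
    | Sum.inl _ => acc) g

/-- `val` is the family `(val A)_{A ∈ N}` defined by the straight-line grammar:
`val A` is obtained from `rhs A` by replacing all its nonterminal edges, in
derivation order, by the values of their labels. -/
def ValFamily (G : HRG σ ν) [LinearOrder ν] (val : ν → HRHypergraph (σ ⊕ ν)) : Prop :=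
  ∀ A : ν, val A = G.expandVal val (G.rhs A)

/-- The number of internal vertices of `val A`. -/
def iNodes (val : ν → HRHypergraph (σ ⊕ ν)) (A : ν) : ℕ :=
  ((val A).V \ (val A).ext.toFinset).card

/-- The sequence of nonterminals labeling the derivation-tree nodes along the
Dewey address `u` (children are numbered from 0 in derivation order), starting
from a root labeled by the graph `g`. `none` if the address is invalid. -/
def ntSeq (G : HRG σ ν) [LinearOrder ν] : HRHypergraph (σ ⊕ ν) → List ℕ → Option (List ν)
  | _, [] => some []
  | g, i :: u =>
    match (ntEdgeList g)[i]? with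
    | some e =>
      match g.lab e with
      | Sum.inr B => (ntSeq G (G.rhs B) u).map (fun Bs => B :: Bs)
      | Sum.inl _ => none
    | none => none

/-- The graph `g_u` labeling the derivation-tree node at Dewey address `u`
(starting from a root labeled by `g`), if the address is valid. -/
def graphAt (G : HRG σ ν) [LinearOrder ν] : HRHypergraph (σ ⊕ ν) → List ℕ → Option (HRHypergraph (σ ⊕ ν))
  | g, [] => some g
  | g, i :: u =>
    match (ntEdgeList g)[i]? with
    | some e =>
      match g.lab e with
      | Sum.inr B => graphAt G (G.rhs B) u
      | Sum.inl _ => none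
    | none => none

/-- The nonterminal (or start, `none`) labeling the derivation-tree node at address
`u` in the derivation tree rooted at `root`. -/
def ntAtNode (G : HRG σ ν) [LinearOrder ν] (root : Option ν) (u : List ℕ) :
    Option (Option ν) :=
  (ntSeq G (G.graphOf root) u).map (fun Bs => (Bs.map some).getLastD root)

/-- `iN`-value of the label of edge `e` (0 for terminal labels). -/
def iNOf (iN : ν → ℕ) (g : HRHypergraph (σ ⊕ ν)) (e : ℕ) : ℕ :=
  match g.lab e with
  | Sum.inr B => iN B
  | Sum.inl _ => 0

/-- `first(u)` relative to the derivation tree rooted at `g`, where `iN B` is the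
number of internal vertices of `val B`:
`first(ε) = 0` and `first(v.i) = first(v) + |V_{g_v}| - |ext_{g_v}| + Σ_{j<i} iN(lab e_j)`. -/
def firstAux (G : HRG σ ν) [LinearOrder ν] (iN : ν → ℕ) :
    HRHypergraph (σ ⊕ ν) → List ℕ → ℕ
  | _, [] => 0
  | g, i :: u =>
    (g.V.card - g.ext.length + (((ntEdgeList g).take i).map (iNOf iN g)).sum) +
      (match (ntEdgeList g)[i]? with
       | some e =>
         (match g.lab e with
          | Sum.inr B => firstAux G iN (G.rhs B) u
          | Sum.inl _ => 0)
       | none => 0)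

/-- `TraverseRel G a k l g x u y` formalizes `traverse_{k,l}(A,x,a) = (u,y)` for the
rule with right-hand side `g`: either `g` itself contains an `a`-labeled edge with
`x` at position `k` and `y` at position `l` (then `u = ε`), or `x` is the `j`-th
attached vertex of the `i`-th nonterminal edge `e` of `g` and the traversal
continues from the `j`-th external vertex of `rhs (lab e)`. -/
inductive TraverseRel (G : HRG σ ν) [LinearOrder ν] (a : σ) (k l : ℕ) :
    HRHypergraph (σ ⊕ ν) → ℕ → List ℕ → ℕ → Prop
  | base {g : HRHypergraph (σ ⊕ ν)} {x y e : ℕ}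
      (he : e ∈ g.E) (hlab : g.lab e = Sum.inl a)
      (hk : (g.att e)[k]? = some x) (hl : (g.att e)[l]? = some y) :
      TraverseRel G a k l g x [] y
  | step {g : HRHypergraph (σ ⊕ ν)} {x i e : ℕ} {B : ν} {j z : ℕ} {v : List ℕ} {y : ℕ}
      (hi : (ntEdgeList g)[i]? = some e) (hB : g.lab e = Sum.inr B)
      (hx : (g.att e)[j]? = some x) (hz : (G.rhs B).ext[j]? = some z)
      (hrec : TraverseRel G a k l (G.rhs B) z v y) :
      TraverseRel G a k l g x (i :: v) y

/-- `InternalRel G g0 u x v y` formalizes `internal(u,x) = (v,y)` in the derivation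
tree rooted at `g0`: the vertex `x` of `g_u` is identified, through the chain of
external-vertex identifications of the derivation, with the internal vertex `y`
of `g_v` at the ancestor `v` of `u`. -/
inductive InternalRel (G : HRG σ ν) [LinearOrder ν] (g0 : HRHypergraph (σ ⊕ ν)) :
    List ℕ → ℕ → List ℕ → ℕ → Prop
  | refl {u : List ℕ} {x : ℕ} {g : HRHypergraph (σ ⊕ ν)}
      (hg : graphAt G g0 u = some g) (hx : x ∈ g.V) (hint : x ∉ g.ext) :
      InternalRel G g0 u x u x
  | up {u : List ℕ} {i x j : ℕ} {g gc : HRHypergraph (σ ⊕ ν)} {e y : ℕ} {v : List ℕ} {z : ℕ}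
      (hg : graphAt G g0 u = some g)
      (he : (ntEdgeList g)[i]? = some e)
      (hgc : graphAt G g0 (u ++ [i]) = some gc)
      (hx : gc.ext[j]? = some x) (hy : (g.att e)[j]? = some y)
      (hrec : InternalRel G g0 u y v z) :
      InternalRel G g0 (u ++ [i]) x v z

end HRG

/-- A tableau: a matrix of cells (each holding a pointer `nxt` and a vertex number
`vtx`), together with the column vectors `nt` and `first` and an offset.
Rows and columns are 0-based; `nt i = none` denotes the start graph. -/
structure Tableau (ν : Type v) where
  rows : ℕ
  cols : ℕ
  nxt : ℕ → ℕ → Option (ℕ × ℕ)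
  vtx : ℕ → ℕ → ℕ
  nt : ℕ → Option ν
  first : ℕ → ℕ
  off : ℕ

namespace Tableau

variable {ν : Type v}

/-- Following the `nxt` pointer of cell `(i,j)`, and one more pointer if the first
one is downwards (targets a row strictly below `i`). -/
def findVertex (t : Tableau ν) (i j : ℕ) : Option (ℕ × ℕ) :=
  match t.nxt i j with
  | none => none
  | some (i', j') => if i' ≤ i then some (i', j') else t.nxt i' j'

/-- The cell of `t` redirected by `concat` for column `j`: the target of the
downwards pointer of the first-row cell `(0,j)`, if that pointer is downwards,
and `(0,j)` itself otherwise. -/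
def downTarget (t : Tableau ν) (j : ℕ) : ℕ × ℕ :=
  match t.nxt 0 j with
  | some (i', j') => if 0 < i' then (i', j') else (0, j)
  | none => (0, j)

end Tableau

namespace HRG

variable {σ : Type u} {ν : Type v}

/-- The first `m` rows of the tableau `t` model the path from the root (labeled by
`graphOf root`) to the node `u` (with `m = |u| + 1`) of the derivation tree:
rows carry the correct nonterminals and (offset-adjusted) `first` values, and for
every external vertex of every row graph, `findVertex` reaches, in at most two
pointer steps, the cell holding the internal vertex it is identified with
(a first-row cell with `vtx = 0` if no such vertex exists), and a pointer is
upwards iff no lower row shares its `findVertex` value. -/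
def ModelsUpTo (G : HRG σ ν) [LinearOrder ν] (iN : ν → ℕ) (root : Option ν)
    (u : List ℕ) (t : Tableau ν) (m : ℕ) : Prop :=
  ∃ Bs : List ν, ntSeq G (G.graphOf root) u = some Bs ∧
    m = u.length + 1 ∧ m ≤ t.rows ∧
    (∀ i < m, t.nt i = (root :: Bs.map some).getD i root) ∧
    (∀ i < m, t.first i + t.off = firstAux G iN (G.graphOf root) (u.take i)) ∧
    (∀ i < m, ∀ gi, graphAt G (G.graphOf root) (u.take i) = some gi →
      ∀ j y, gi.ext[j]? = some y →
        (∀ v z, InternalRel G (G.graphOf root) (u.take i) y v z →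
          ∃ j', t.findVertex i j = some (v.length, j') ∧ t.vtx v.length j' = z) ∧
        ((¬ ∃ v z, InternalRel G (G.graphOf root) (u.take i) y v z) →
          ∃ j', t.findVertex i j = some (0, j') ∧ t.vtx 0 j' = 0) ∧
        ((∀ p ∈ t.nxt i j, p.1 ≤ i) ↔
          ¬ ∃ i' j', i < i' ∧ i' < m ∧ j' < t.cols ∧
            t.findVertex i' j' = t.findVertex i j))

/-- The tableau `t` models the path from the root to the node `u` of the derivation
tree rooted at `graphOf root` (Definition of `tab(u)`): in addition to
`ModelsUpTo` for all rows, it has exactly `|u| + 1` rows, offset `0`, and all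
out-of-range entries are `0`. -/
def Models (G : HRG σ ν) [LinearOrder ν] (iN : ν → ℕ) (root : Option ν)
    (u : List ℕ) (t : Tableau ν) : Prop :=
  ModelsUpTo G iN root u t (u.length + 1) ∧
  t.rows = u.length + 1 ∧ t.off = 0 ∧
  (∀ i j : ℕ, t.rows ≤ i ∨ t.cols ≤ j → t.nxt i j = none ∧ t.vtx i j = 0)

/-- The one-row tableau `t_ε` for the root of the derivation tree of `root`:
every column `j < rank root` holds a self-loop (upwards) pointer, all other
entries are `0`. -/
def initTab (G : HRG σ ν) (root : Option ν) (κ : ℕ) : Tableau ν where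
  rows := 1
  cols := κ
  nxt := fun a b => if a = 0 ∧ b < G.rankO root then some (0, b) else none
  vtx := fun _ _ => 0
  nt := fun _ => root
  first := fun _ => 0
  off := 0

/-- One step of Algorithm `createTableau`: extend the tableau `t`, which models a
path ending in a node labeled by nonterminal `B = nt (rows - 1)`, by a new bottom
row for the `l`-th child (the `l`-th nonterminal edge `e_l` of `rhs B`): for each
`j < rank e_l`, with `x = att(e_l)[j]`, if `x` is internal then the new cell points
to the cell above which receives `vtx = x`; if `x` is the `j'`-th external vertex
of `rhs B` then the new cell takes over the pointer of cell `(rows-1, j')`, which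
in turn points down to the new cell, and all pointers from higher rows targeting
`(rows-1, j')` are redirected to the new cell. -/
def extendTab (G : HRG σ ν) [LinearOrder ν] (iN : ν → ℕ) (t : Tableau ν) (l : ℕ) :
    Tableau ν :=
  let m := t.rows
  let g := G.graphOf (t.nt (m - 1))
  let es := ntEdgeList g
  let e := es.getD l 0
  let al := g.att e
  let isExtCol : ℕ → Bool := fun c =>
    match g.ext[c]? with
    | some x => decide (x ∈ al)
    | none => false
  let newColOf : ℕ → ℕ := fun c =>
    match g.ext[c]? with
    | some x => List.idxOf x al
    | none => 0
  { rows := m + 1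
    cols := t.cols
    nt := fun i => if i = m then
        (match g.lab e with
         | Sum.inr B => some B
         | Sum.inl _ => none)
      else t.nt i
    first := fun i => if i = m then
        t.first (m - 1) + g.V.card - g.ext.length + ((es.take l).map (iNOf iN g)).sum
      else t.first i
    off := t.off
    vtx := fun i j =>
      if i = m then 0
      else if i = m - 1 ∧ j < al.length ∧ al.getD j 0 ∉ g.ext then al.getD j 0
      else t.vtx i j
    nxt := fun i j =>
      if i = m then
        (if j < al.length then
          (if al.getD j 0 ∈ g.ext then t.nxt (m - 1) (List.idxOf (al.getD j 0) g.ext)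
           else some (m - 1, j))
         else none)
      else if i = m - 1 then
        (if isExtCol j then some (m, newColOf j) else t.nxt i j)
      else
        (match t.nxt i j with
         | some (i', c) => if i' = m - 1 ∧ isExtCol c then some (m, newColOf c) else some (i', c)
         | none => none) }

/-- Algorithm `createTableau`: the tableau for the node at address `u` of the
derivation tree rooted at `graphOf root`, built by starting from `initTab` and
extending one row per step along the path. -/
def createTableau (G : HRG σ ν) [LinearOrder ν] (iN : ν → ℕ) (κ : ℕ)
    (root : Option ν) (u : List ℕ) : Tableau ν :=
  u.foldl (extendTab G iN) (initTab G root κ)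

open Classical in
/-- Algorithm `concat` (as the resulting virtual tableau): concatenate `t₂`
(modeling a path in the derivation tree of the nonterminal at row `r` of `t₁`)
to row `r` of `t₁`; `kB` is the rank of that nonterminal. Rows `< r` are those
of `t₁`; rows `≥ r` come from `t₂`, with, for each column `j < kB`, the relevant
upwards pointer of `t₂` redirected to `findVertex(t₁(r,j))`, and with the
offset of `t₂` set to `t₁.off + t₁.first r`. -/
noncomputable def concatTab (t₂ t₁ : Tableau ν) (r kB : ℕ) : Tableau ν where
  rows := r + t₂.rows
  cols := t₁.cols
  nt := fun i => if i < r then t₁.nt i else t₂.nt (i - r)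
  first := fun i => if i < r then t₁.first i + t₁.off
    else t₂.first (i - r) + (t₁.off + t₁.first r)
  off := 0
  vtx := fun i j => if i < r then t₁.vtx i j else t₂.vtx (i - r) j
  nxt := fun i j =>
    if i < r then t₁.nxt i j
    else if h : ∃ j0, j0 < kB ∧ Tableau.downTarget t₂ j0 = (i - r, j) then
      t₁.findVertex r h.choose
    else (t₂.nxt (i - r) j).map (fun p => (p.1 + r, p.2))

end HRG

/-- The string graph with `N` consecutive `a`-labeled edges: vertices `1,…,N+1`,
the `i`-th edge attached to `(i, i+1)`. -/
def pathGraph {L : Type u} (N : ℕ) (a : L) : HRHypergraph L where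
  V := Finset.Icc 1 (N + 1)
  E := Finset.Icc 1 N
  att := fun e => [e, e + 1]
  lab := fun _ => a
  ext := []

/-- The star grammar `G_n` of Figure `starGrammar1`: terminal alphabet `{a}` of rank 2,
nonterminals `A_0, …, A_{n-1}` of rank 2; the start graph has vertices `{1,2,3}` and
two `A_0`-edges attached to `(1,2)` and `(1,3)`; `rhs A_i` has vertices `{1,2,3}`,
external vertices `(2,3)`, and two edges labeled `A_{i+1}` (labeled `a` for `i = n-1`)
attached to `(2,3)` and `(2,1)`. -/
def starG (n : ℕ) : HRG Unit (Fin n) where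
  rankT := fun _ => 2
  rankN := fun _ => 2
  rhs := fun i =>
    { V := {1, 2, 3}
      E := {1, 2}
      att := fun e => if e = 1 then [2, 3] else [2, 1]
      lab := fun _ => if h : i.val + 1 < n then Sum.inr ⟨i.val + 1, h⟩ else Sum.inl ()
      ext := [2, 3] }
  start :=
    { V := {1, 2, 3}
      E := {1, 2}
      att := fun e => if e = 1 then [1, 2] else [1, 3]
      lab := fun _ => if h : 0 < n then Sum.inr ⟨0, h⟩ else Sum.inl ()
      ext := [] }


/-!
The node at depth `d ≥ 1` of `dt(G_n)` is labelled `A_d` and has two children as long as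
`d < n`, so the leaves are exactly the `2^n` addresses in `{0,1}^n`.

Tableaux of different leaves are told apart by where the second external vertex (vertex `3`)
of a node becomes internal. Going up the address, a `1`-child hands it on to vertex `3` of its
parent, while a `0`-child identifies it with the internal vertex `1` of its parent (vertex `2` of
the start graph). If two leaves first differ at position `k`, then at depth `k + 1` this vertex
lands in the parent for the `0`-branch but strictly higher up (or on another vertex of the start
graph) for the `1`-branch, so the `findVertex` targets of that cell differ in row or in `vtx`.
A tableau modelling a leaf is obtained by giving every external vertex of every row its own
target column.
-/

namespace HRG

variable {σ : Type u} {ν : Type v} [LinearOrder ν] {G : HRG σ ν}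

theorem graphAt_append (g : HRHypergraph (σ ⊕ ν)) (u w : List ℕ) :
    G.graphAt g (u ++ w) = (G.graphAt g u).bind (G.graphAt · w) := by
  induction u generalizing g with
  | nil => rfl
  | cons i u ih =>
    simp only [List.cons_append, graphAt]
    split
    · split
      · exact ih _
      · rfl
    · rfl

theorem isSome_ntSeq (g : HRHypergraph (σ ⊕ ν)) (u : List ℕ) :
    (G.ntSeq g u).isSome = (G.graphAt g u).isSome := by
  induction u generalizing g with
  | nil => rfl
  | cons i u ih =>
    simp only [ntSeq, graphAt]
    split
    · split
      · rw [Option.isSome_map, ih]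
      · rfl
    · rfl

theorem InternalRel.unique {g₀ : HRHypergraph (σ ⊕ ν)}
    (hnodup : ∀ w g, G.graphAt g₀ w = some g → g.ext.Nodup)
    {u : List ℕ} {x : ℕ} {v v' : List ℕ} {z z' : ℕ}
    (h : InternalRel G g₀ u x v z) (h' : InternalRel G g₀ u x v' z') : v = v' ∧ z = z' := by
  induction h generalizing v' z' with
  | refl hg hx hint =>
    cases h' with
    | refl => exact ⟨rfl, rfl⟩
    | up _ _ hgc hx' =>
      rw [hg, Option.some_inj] at hgc
      exact absurd (hgc ▸ List.mem_of_getElem? hx') hint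
  | up hg he hgc hx hy _ ih =>
    generalize hw : _ ++ [_] = w at h'
    cases h' with
    | refl hg' _ hint =>
      rw [← hw, hgc, Option.some_inj] at hg'
      exact absurd (hg' ▸ List.mem_of_getElem? hx) hint
    | up hg' he' hgc' hx' hy' hrec' =>
      obtain ⟨rfl, hi⟩ := List.append_inj' hw rfl
      obtain rfl := List.singleton_inj.mp hi
      obtain rfl := Option.some_inj.mp (hg.symm.trans hg')
      obtain rfl := Option.some_inj.mp (he.symm.trans he')
      obtain rfl := Option.some_inj.mp (hgc.symm.trans hgc')
      obtain ⟨_, hx₁⟩ := List.getElem?_eq_some_iff.mp hx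
      obtain ⟨_, hx₂⟩ := List.getElem?_eq_some_iff.mp hx'
      obtain rfl := (hnodup _ _ hgc).getElem_inj_iff.mp (hx₁.trans hx₂.symm)
      exact ih (Option.some_inj.mp (hy.symm.trans hy') ▸ hrec')

end HRG

theorem ncard_setOf_length_eq_forall_lt (n k : ℕ) :
    {u : List ℕ | u.length = n ∧ ∀ x ∈ u, x < k}.ncard = k ^ n := by
  have hrange : {u : List ℕ | u.length = n ∧ ∀ x ∈ u, x < k} =
      Set.range fun f : Fin n → Fin k => List.ofFn fun j => (f j : ℕ) := by
    ext u
    constructor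
    · rintro ⟨rfl, hu⟩
      exact ⟨fun j => ⟨u[j], hu _ (List.getElem_mem _)⟩, List.ofFn_getElem⟩
    · rintro ⟨f, rfl⟩
      simp
  have hinj : Function.Injective fun f : Fin n → Fin k => List.ofFn fun j => (f j : ℕ) :=
    fun f g h => funext fun j => Fin.val_injective (congrFun (List.ofFn_injective h) j)
  rw [hrange, Set.ncard_range_of_injective hinj, Nat.card_eq_fintype_card]
  simp

theorem List.exists_take_eq_and_getElem?_ne {α : Type*} {l l' : List α} (h : l ≠ l') :
    ∃ k : ℕ, l.take k = l'.take k ∧ l[k]? ≠ l'[k]? := by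
  classical
  have hex : ∃ k : ℕ, l[k]? ≠ l'[k]? := by
    by_contra! hall
    exact h (List.ext_getElem? hall)
  refine ⟨Nat.find hex, List.ext_getElem? fun m => ?_, Nat.find_spec hex⟩
  simp only [List.getElem?_take]
  split_ifs with hm
  · exact not_not.mp (Nat.find_min hex hm)
  · rfl

namespace StarGrammar

open HRG

variable {n : ℕ}

def layer (n d : ℕ) : HRHypergraph (Unit ⊕ Fin n) :=
  if h : 0 < d ∧ d ≤ n then (starG n).rhs ⟨d - 1, by omega⟩ else (starG n).start

theorem layer_zero : layer n 0 = (starG n).start := rfl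

theorem layer_succ {d : ℕ} (hd : d < n) : layer n (d + 1) = (starG n).rhs ⟨d, hd⟩ := by
  simp [layer, hd]

theorem layer_V (d : ℕ) : (layer n d).V = {1, 2, 3} := by
  unfold layer; split <;> rfl

theorem layer_E (d : ℕ) : (layer n d).E = {1, 2} := by
  unfold layer; split <;> rfl

theorem layer_att {d : ℕ} (hd : d ≤ n) :
    (layer n d).att = fun e => if e = 1 then (if d = 0 then [1, 2] else [2, 3])
      else (if d = 0 then [1, 3] else [2, 1]) := by
  rcases d with _ | d
  · rfl
  · rw [layer_succ hd]; rfl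

theorem layer_lab {d : ℕ} (hd : d < n) (e : ℕ) : (layer n d).lab e = Sum.inr ⟨d, hd⟩ := by
  rcases d with _ | d
  · simp [layer, starG, hd]
  · simp [layer_succ (Nat.lt_of_succ_lt hd), starG, hd]

theorem layer_ext {d : ℕ} (h₀ : 0 < d) (hd : d ≤ n) : (layer n d).ext = [2, 3] := by
  simp [layer, h₀, hd, starG]

theorem nodup_layer_ext (d : ℕ) : (layer n d).ext.Nodup := by
  unfold layer; split <;> simp [starG]

private theorem sort_one_two : ({1, 2} : Finset ℕ).sort (· ≤ ·) = [1, 2] := by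
  rw [Finset.sort_insert] <;> simp

theorem ntEdgeList_layer {d : ℕ} (hd : d < n) :
    ntEdgeList (layer n d) = if d = 0 then [1, 2] else [2, 1] := by
  unfold ntEdgeList
  rw [Finset.filter_true_of_mem (fun e _ => by rw [layer_lab hd]; rfl), layer_E, sort_one_two]
  rcases d with _ | d <;> simp [List.mergeSort, dtLE, layer_att hd.le, listLexLE]

theorem ntEdgeList_layer_self : ntEdgeList (layer n n) = [] := by
  unfold ntEdgeList
  rw [Finset.filter_false_of_mem]
  · simp
  intro e _
  rcases n with _ | n
  · simp [layer, starG]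
  · simp [layer_succ (Nat.lt_succ_self n), starG]

theorem att_ntEdgeList_layer {d i : ℕ} (hd : d < n) (hi : i < 2) :
    (layer n d).att ((ntEdgeList (layer n d)).getD i 0) =
      if d = 0 then [1, i + 2] else [2, 2 * i + 1] := by
  rw [layer_att hd.le, ntEdgeList_layer hd]
  interval_cases i <;> by_cases h : d = 0 <;> simp [h]

theorem graphAt_layer_singleton {d : ℕ} (hd : d ≤ n) (i : ℕ) :
    graphAt (starG n) (layer n d) [i] =
      if d < n ∧ i < 2 then some (layer n (d + 1)) else none := by
  rcases hd.lt_or_eq with hd | rfl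
  · unfold graphAt
    rw [ntEdgeList_layer hd]
    match i with
    | 0 | 1 => split_ifs <;> simp [layer_lab hd, graphAt, layer_succ hd] <;> omega
    | i + 2 => split_ifs <;> simp <;> omega
  · simp [graphAt, ntEdgeList_layer_self]

theorem graphAt_start (u : List ℕ) :
    graphAt (starG n) (starG n).start u =
      if u.length ≤ n ∧ ∀ x ∈ u, x < 2 then some (layer n u.length) else none := by
  induction u using List.reverseRecOn with
  | nil => simp [graphAt, layer_zero]
  | append_singleton w i ih =>
    rw [graphAt_append, ih]
    by_cases hw : w.length ≤ n ∧ ∀ x ∈ w, x < 2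
    · rw [if_pos hw, Option.bind_some, graphAt_layer_singleton hw.1]
      simp only [List.length_append, List.length_singleton, List.mem_append,
        List.mem_singleton]
      congr 1
      grind
    · rw [if_neg hw, if_neg (by grind)]
      rfl

theorem nodup_ext_of_graphAt_start {w : List ℕ} {g : HRHypergraph (Unit ⊕ Fin n)}
    (hg : graphAt (starG n) (starG n).start w = some g) : g.ext.Nodup := by
  rw [graphAt_start] at hg
  split_ifs at hg
  exact Option.some_inj.mp hg ▸ nodup_layer_ext _

theorem isSome_ntSeq_start_iff (u : List ℕ) :
    (ntSeq (starG n) (starG n).start u).isSome ↔ u.length ≤ n ∧ ∀ x ∈ u, x < 2 := by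
  rw [isSome_ntSeq, graphAt_start]
  split_ifs with h
  · simpa using h
  · simpa using h

theorem isLeaf_iff (u : List ℕ) :
    ((ntSeq (starG n) (starG n).start u).isSome = true ∧
        ∀ i : ℕ, ¬ (ntSeq (starG n) (starG n).start (u ++ [i])).isSome = true) ↔
      u.length = n ∧ ∀ x ∈ u, x < 2 := by
  simp only [isSome_ntSeq_start_iff, List.length_append, List.length_singleton, List.mem_append,
    List.mem_singleton]
  constructor
  · rintro ⟨⟨hlen, hu⟩, hleaf⟩
    refine ⟨?_, hu⟩
    by_contra hne
    exact hleaf 0 ⟨by omega, by grind⟩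
  · rintro ⟨hlen, hu⟩
    exact ⟨⟨hlen.le, hu⟩, fun i h => by omega⟩

def anchorRev : List ℕ → List ℕ × ℕ
  | [] => ([], 3)
  | 0 :: w => if w = [] then ([], 2) else (w.reverse, 1)
  | (_ + 1) :: w => anchorRev w

/-- `anchor u j = (v, z)` means `internal(u, x) = (v, z)` for the `j`-th external vertex `x` of the
node `u`; for vertex `3` the address is read from the node upwards, hence `anchorRev u.reverse`. -/
def anchor (u : List ℕ) (j : ℕ) : List ℕ × ℕ :=
  if j = 0 then ([], 1) else anchorRev u.reverse

theorem length_anchorRev_lt {w : List ℕ} (hw : w ≠ []) : (anchorRev w).1.length < w.length := by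
  induction w with
  | nil => exact absurd rfl hw
  | cons x w ih =>
    match x, w with
    | 0, w => by_cases h : w = [] <;> simp [anchorRev, h]
    | _ + 1, [] => simp [anchorRev]
    | _ + 1, y :: w =>
      have := ih (List.cons_ne_nil y w)
      simp only [anchorRev, List.length_cons] at this ⊢
      omega

theorem length_anchor_lt {w : List ℕ} (hw : w ≠ []) (j : ℕ) :
    (anchor w j).1.length < w.length := by
  unfold anchor
  split_ifs
  · exact List.length_pos_of_ne_nil hw
  · simpa using length_anchorRev_lt (List.reverse_ne_nil_iff.mpr hw)

theorem anchor_append_zero_ne_one (w : List ℕ) :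
    ((anchor (w ++ [0]) 1).1.length, (anchor (w ++ [0]) 1).2) ≠
      ((anchor (w ++ [1]) 1).1.length, (anchor (w ++ [1]) 1).2) := by
  rcases eq_or_ne w [] with rfl | hw
  · simp [anchor, anchorRev]
  · have := length_anchorRev_lt (List.reverse_ne_nil_iff.mpr hw)
    simp only [anchor, anchorRev, List.reverse_append, List.reverse_singleton,
      List.singleton_append, List.reverse_eq_nil_iff, hw, List.reverse_reverse] at this ⊢
    simp at this
    grind

theorem anchor_append_ne (w : List ℕ) {a b : ℕ} (ha : a < 2) (hb : b < 2) (hab : a ≠ b) :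
    ((anchor (w ++ [a]) 1).1.length, (anchor (w ++ [a]) 1).2) ≠
      ((anchor (w ++ [b]) 1).1.length, (anchor (w ++ [b]) 1).2) := by
  obtain ⟨rfl, rfl⟩ | ⟨rfl, rfl⟩ : a = 0 ∧ b = 1 ∨ a = 1 ∧ b = 0 := by omega
  · exact anchor_append_zero_ne_one w
  · exact (anchor_append_zero_ne_one w).symm

theorem internalRel_append_singleton {w : List ℕ} {i j y y' : ℕ} {v : List ℕ} {z : ℕ}
    (hwi : (w ++ [i]).length ≤ n ∧ ∀ x ∈ w ++ [i], x < 2) (hy : [2, 3][j]? = some y)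
    (hy' : (if w.length = 0 then [1, i + 2] else [2, 2 * i + 1])[j]? = some y')
    (h : InternalRel (starG n) (starG n).start w y' v z) :
    InternalRel (starG n) (starG n).start (w ++ [i]) y v z := by
  have hw : w.length < n := by simp at hwi; omega
  have hi : i < 2 := hwi.2 i (by simp)
  have hw' : w.length ≤ n ∧ ∀ x ∈ w, x < 2 :=
    ⟨hw.le, fun x hx => hwi.2 x (by simp [hx])⟩
  refine InternalRel.up (graphAt_start w ▸ if_pos hw') ?_ (graphAt_start _ ▸ if_pos hwi) ?_
    (att_ntEdgeList_layer hw hi ▸ hy') h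
  · rw [List.getElem?_eq_getElem (by rw [ntEdgeList_layer hw]; split_ifs <;> simp <;> omega),
      ← List.getD_eq_getElem]
  · rw [layer_ext (by simp) hwi.1]; exact hy

theorem internalRel_anchor {u : List ℕ} (hu : u.length ≤ n ∧ ∀ x ∈ u, x < 2)
    (hne : u ≠ []) {j y : ℕ} (hy : [2, 3][j]? = some y) :
    InternalRel (starG n) (starG n).start u y (anchor u j).1 (anchor u j).2 := by
  induction u using List.reverseRecOn generalizing j y with
  | nil => exact absurd rfl hne
  | append_singleton w i ih =>
    have hw : w.length < n := by simp at hu; omega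
    have hw' : w.length ≤ n ∧ ∀ x ∈ w, x < 2 :=
      ⟨hw.le, fun x hx => hu.2 x (by simp [hx])⟩
    have hi : i = 0 ∨ i = 1 := by have := hu.2 i (by simp); omega
    have hj : j = 0 ∧ y = 2 ∨ j = 1 ∧ y = 3 := by
      match j with
      | 0 | 1 => simp_all
      | j + 2 => simp at hy
    have hup := fun y' => internalRel_append_singleton (y' := y')
      (v := (anchor (w ++ [i]) j).1) (z := (anchor (w ++ [i]) j).2) hu hy
    rcases eq_or_ne w [] with rfl | hw_ne
    · have hroot : ∀ y' ∈ (starG n).start.V,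
          InternalRel (starG n) (starG n).start [] y' [] y' :=
        fun y' hy' => InternalRel.refl rfl hy' (by simp [starG])
      rcases hi with rfl | rfl <;> rcases hj with ⟨rfl, rfl⟩ | ⟨rfl, rfl⟩
      · exact hup 1 (by simp) (hroot 1 (by simp [starG]))
      · exact hup 2 (by simp) (hroot 2 (by simp [starG]))
      · exact hup 1 (by simp) (hroot 1 (by simp [starG]))
      · exact hup 3 (by simp) (hroot 3 (by simp [starG]))
    · have hw0 : w.length ≠ 0 := by simpa using hw_ne
      rcases hi with rfl | rfl <;> rcases hj with ⟨rfl, rfl⟩ | ⟨rfl, rfl⟩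
      · exact hup 2 (by simp [hw0]) (ih hw' hw_ne (j := 0) rfl)
      · refine hup 1 (by simp [hw0]) ?_
        rw [show anchor (w ++ [0]) 1 = (w, 1) by simp [anchor, anchorRev, hw_ne]]
        exact InternalRel.refl (graphAt_start w ▸ if_pos hw') (by simp [layer_V])
          (by simp [layer_ext (Nat.pos_of_ne_zero hw0) hw.le])
      · exact hup 2 (by simp [hw0]) (ih hw' hw_ne (j := 0) rfl)
      · refine hup 3 (by simp [hw0]) ?_
        rw [show anchor (w ++ [1]) 1 = anchor w 1 by simp [anchor, anchorRev]]
        exact ih hw' hw_ne rfl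

/-- Row `i ≥ 1` keeps the internal vertex of its `j`-th external vertex in a column `2 * i + j`
of its own, so no two rows share a `findVertex` target and every pointer points upwards. -/
def leafTab (iN : Fin n → ℕ) (u : List ℕ) : Tableau (Fin n) where
  rows := n + 1
  cols := 2 * n + 2
  nxt i j :=
    if 1 ≤ i ∧ i ≤ n ∧ j < 2 then some ((anchor (u.take i) j).1.length, 2 * i + j) else none
  vtx r c :=
    if 1 ≤ c / 2 ∧ c / 2 ≤ n ∧ r = (anchor (u.take (c / 2)) (c % 2)).1.length then
      (anchor (u.take (c / 2)) (c % 2)).2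
    else 0
  nt i := (none :: ((ntSeq (starG n) (starG n).start u).getD []).map some).getD i none
  first i := firstAux (starG n) iN (starG n).start (u.take i)
  off := 0

variable {iN : Fin n → ℕ} {u : List ℕ}

theorem length_anchor_take_lt (hu : u.length = n) {i : ℕ} (hi : 1 ≤ i) (hin : i ≤ n)
    (j : ℕ) :
    (anchor (u.take i) j).1.length < i := by
  have hne : u.take i ≠ [] := List.ne_nil_of_length_pos (by simp; omega)
  simpa [hu, hin] using length_anchor_lt hne j

theorem leafTab_findVertex (hu : u.length = n) (i j : ℕ) :
    (leafTab iN u).findVertex i j = (leafTab iN u).nxt i j := by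
  unfold Tableau.findVertex
  simp only [leafTab]
  split_ifs with h
  · exact if_pos (length_anchor_take_lt hu h.1 h.2.1 j).le
  · rfl

theorem eq_of_leafTab_nxt_eq {i i' j j' : ℕ} {p : ℕ × ℕ}
    (h : (leafTab iN u).nxt i j = some p) (h' : (leafTab iN u).nxt i' j' = some p) : i = i' := by
  simp only [leafTab] at h h'
  split_ifs at h h'
  rw [← h', Option.some_inj, Prod.mk.injEq] at h
  omega

theorem leafTab_vtx_anchor {i j : ℕ} (hi : 1 ≤ i) (hin : i ≤ n) (hj : j < 2) :
    (leafTab iN u).vtx (anchor (u.take i) j).1.length (2 * i + j) = (anchor (u.take i) j).2 := by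
  have h₁ : (2 * i + j) / 2 = i := by omega
  have h₂ : (2 * i + j) % 2 = j := by omega
  simp [leafTab, h₁, h₂, hi, hin]

theorem leafTab_eq_zero (hu : u.length = n) {i j : ℕ}
    (h : (leafTab iN u).rows ≤ i ∨ (leafTab iN u).cols ≤ j) :
    (leafTab iN u).nxt i j = none ∧ (leafTab iN u).vtx i j = 0 := by
  simp only [leafTab] at h ⊢
  refine ⟨if_neg (by omega), if_neg ?_⟩
  rintro ⟨h₁, h₂, rfl⟩
  have := length_anchor_take_lt hu h₁ h₂ (j % 2)
  omega

theorem models_leafTab (hleaf : u.length = n ∧ ∀ x ∈ u, x < 2) :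
    Models (starG n) iN none u (leafTab iN u) := by
  obtain ⟨hlen, hu⟩ := hleaf
  obtain ⟨Bs, hBs⟩ := Option.isSome_iff_exists.mp
    ((isSome_ntSeq_start_iff (n := n) u).mpr ⟨hlen.le, hu⟩)
  refine ⟨⟨Bs, hBs, rfl, by simp [leafTab, hlen], fun i _ => by simp [leafTab, hBs],
    fun i _ => rfl, ?_⟩, by simp [leafTab, hlen], rfl, fun i j => leafTab_eq_zero hlen⟩
  intro i hi gi hgi j y hjy
  have hi' : (u.take i).length = i := by simp; omega
  have hvalid : (u.take i).length ≤ n ∧ ∀ x ∈ u.take i, x < 2 :=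
    ⟨by omega, fun x hx => hu x (List.mem_of_mem_take hx)⟩
  change graphAt _ (starG n).start _ = _ at hgi
  rw [graphAt_start, if_pos hvalid, Option.some_inj, hi'] at hgi
  subst hgi
  rcases Nat.eq_zero_or_pos i with rfl | hi0
  · simp [layer_zero, starG] at hjy
  rw [layer_ext hi0 (by omega)] at hjy
  have hj : j < 2 := by simpa using (List.getElem?_eq_some_iff.mp hjy).1
  have hex := internalRel_anchor hvalid (List.ne_nil_of_length_pos (by omega)) hjy
  have hnxt : (leafTab iN u).nxt i j = some ((anchor (u.take i) j).1.length, 2 * i + j) := by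
    simp only [leafTab]; rw [if_pos ⟨hi0, by omega, hj⟩]
  refine ⟨fun v z h => ?_, fun h => absurd ⟨_, _, hex⟩ h, iff_of_true ?_ ?_⟩
  · obtain ⟨rfl, rfl⟩ := InternalRel.unique (fun _ _ => nodup_ext_of_graphAt_start) hex h
    exact ⟨2 * i + j, leafTab_findVertex hlen i j ▸ hnxt,
      leafTab_vtx_anchor hi0 (by omega) hj⟩
  · rw [hnxt]
    rintro p ⟨⟩
    exact (length_anchor_take_lt hlen hi0 (by omega) j).le
  · rintro ⟨i', j', hii', -, -, h⟩
    rw [leafTab_findVertex hlen, leafTab_findVertex hlen, hnxt] at h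
    exact hii'.ne (eq_of_leafTab_nxt_eq hnxt h)

theorem findVertex_of_models {t : Tableau (Fin n)} (ht : Models (starG n) iN none u t)
    (hleaf : u.length = n ∧ ∀ x ∈ u, x < 2) {i : ℕ} (hi : 1 ≤ i) (hin : i ≤ n) :
    ∃ j', t.findVertex i 1 = some ((anchor (u.take i) 1).1.length, j') ∧
      t.vtx (anchor (u.take i) 1).1.length j' = (anchor (u.take i) 1).2 := by
  obtain ⟨-, -, -, -, -, -, hmain⟩ := ht.1
  have hi' : (u.take i).length = i := by simp; omega
  have hvalid : (u.take i).length ≤ n ∧ ∀ x ∈ u.take i, x < 2 :=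
    ⟨by omega, fun x hx => hleaf.2 x (List.mem_of_mem_take hx)⟩
  have hgi : graphAt (starG n) (starG n).start (u.take i) = some (layer n i) := by
    rw [graphAt_start, if_pos hvalid, hi']
  have hext : (layer n i).ext[1]? = some 3 := by simp [layer_ext hi hin]
  exact (hmain i (by omega) _ hgi 1 3 hext).1 _ _
    (internalRel_anchor hvalid (List.ne_nil_of_length_pos (by omega)) (by simp))

theorem ne_of_models {u' : List ℕ} (hleaf : u.length = n ∧ ∀ x ∈ u, x < 2)
    (hleaf' : u'.length = n ∧ ∀ x ∈ u', x < 2) (hne : u ≠ u') {t t' : Tableau (Fin n)}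
    (ht : Models (starG n) iN none u t) (ht' : Models (starG n) iN none u' t') : t ≠ t' := by
  rintro rfl
  obtain ⟨k, htake, hk⟩ := List.exists_take_eq_and_getElem?_ne hne
  have hkn : k < n := by
    by_contra! h
    exact hk (by simp [hleaf.1, hleaf'.1, h])
  obtain ⟨a, ha⟩ : ∃ a, u[k]? = some a := ⟨_, List.getElem?_eq_getElem (by omega)⟩
  obtain ⟨b, hb⟩ : ∃ b, u'[k]? = some b := ⟨_, List.getElem?_eq_getElem (by omega)⟩
  have hab : a ≠ b := by rintro rfl; exact hk (ha.trans hb.symm)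
  obtain ⟨j₁, hf₁, hv₁⟩ := findVertex_of_models ht hleaf (i := k + 1) (by omega) hkn
  obtain ⟨j₂, hf₂, hv₂⟩ := findVertex_of_models ht' hleaf' (i := k + 1) (by omega) hkn
  rw [hf₁, Option.some_inj, Prod.mk.injEq] at hf₂
  obtain ⟨hl, rfl⟩ := hf₂
  rw [List.take_add_one, ha] at hl hv₁
  rw [List.take_add_one, hb, ← htake] at hl hv₂
  rw [hl, hv₂] at hv₁
  exact anchor_append_ne (u.take k) (hleaf.2 a (List.mem_of_getElem? ha))
    (hleaf'.2 b (List.mem_of_getElem? hb)) hab (Prod.ext hl hv₁.symm)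

end StarGrammar

section Statements

open HRHypergraph HRG

theorem stmt16_general (n : ℕ)
    (val : Fin n → HRHypergraph (Unit ⊕ Fin n)) :
    ({u : List ℕ | (ntSeq (starG n) (starG n).start u).isSome = true ∧
        ∀ i : ℕ, ¬ (ntSeq (starG n) (starG n).start (u ++ [i])).isSome = true}.ncard
      = 2 ^ n) ∧
    (∀ u, ((ntSeq (starG n) (starG n).start u).isSome = true ∧
        ∀ i : ℕ, ¬ (ntSeq (starG n) (starG n).start (u ++ [i])).isSome = true) →
      ∃ t : Tableau (Fin n), Models (starG n) (iNodes val) none u t) ∧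
    (∀ u u' : List ℕ,
      ((ntSeq (starG n) (starG n).start u).isSome = true ∧
        ∀ i : ℕ, ¬ (ntSeq (starG n) (starG n).start (u ++ [i])).isSome = true) →
      ((ntSeq (starG n) (starG n).start u').isSome = true ∧
        ∀ i : ℕ, ¬ (ntSeq (starG n) (starG n).start (u' ++ [i])).isSome = true) →
      u ≠ u' →
      ∀ t t' : Tableau (Fin n), Models (starG n) (iNodes val) none u t →
        Models (starG n) (iNodes val) none u' t' → t ≠ t') ∧
    ∀ (T : Set (Tableau (Fin n))) (hT : T.Finite),
      (∀ u : List ℕ,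
        ((ntSeq (starG n) (starG n).start u).isSome = true ∧
          ∀ i : ℕ, ¬ (ntSeq (starG n) (starG n).start (u ++ [i])).isSome = true) →
        ∃ t ∈ T, Models (starG n) (iNodes val) none u t) →
      2 ^ n ≤ hT.toFinset.card := by
  have hleaf := StarGrammar.isLeaf_iff (n := n)
  have hcard := (congrArg Set.ncard (Set.ext hleaf)).trans (ncard_setOf_length_eq_forall_lt n 2)
  have hdistinct : ∀ u u', _ → _ → u ≠ u' → ∀ t t',
      Models (starG n) (iNodes val) none u t →
      Models (starG n) (iNodes val) none u' t' → t ≠ t' := fun u u' hu hu' hne _ _ =>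
    StarGrammar.ne_of_models ((hleaf u).mp hu) ((hleaf u').mp hu') hne
  refine ⟨hcard, fun u hu => ⟨_, StarGrammar.models_leafTab ((hleaf u).mp hu)⟩, hdistinct,
    fun T hT hcover => ?_⟩
  have : Nonempty (Tableau (Fin n)) := ⟨initTab (starG n) none 0⟩
  choose! f hfT hfM using hcover
  calc 2 ^ n = _ := hcard.symm
    _ ≤ T.ncard := Set.ncard_le_ncard_of_injOn f hfT (fun u hu u' hu' hf => by_contra fun hne =>
        hdistinct u u' hu hu' hne _ _ (hfM u hu) (hfM u' hu') hf) hT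
    _ = hT.toFinset.card := Set.ncard_eq_toFinset_card T hT

theorem stmt16 (n : ℕ) (hn : 1 ≤ n)
    (val : Fin n → HRHypergraph (Unit ⊕ Fin n)) (hval : (starG n).ValFamily val) :
    ({u : List ℕ | (ntSeq (starG n) (starG n).start u).isSome = true ∧
        ∀ i : ℕ, ¬ (ntSeq (starG n) (starG n).start (u ++ [i])).isSome = true}.ncard
      = 2 ^ n) ∧
    (∀ u, ((ntSeq (starG n) (starG n).start u).isSome = true ∧
        ∀ i : ℕ, ¬ (ntSeq (starG n) (starG n).start (u ++ [i])).isSome = true) →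
      ∃ t : Tableau (Fin n), Models (starG n) (iNodes val) none u t) ∧
    (∀ u u' : List ℕ,
      ((ntSeq (starG n) (starG n).start u).isSome = true ∧
        ∀ i : ℕ, ¬ (ntSeq (starG n) (starG n).start (u ++ [i])).isSome = true) →
      ((ntSeq (starG n) (starG n).start u').isSome = true ∧
        ∀ i : ℕ, ¬ (ntSeq (starG n) (starG n).start (u' ++ [i])).isSome = true) →
      u ≠ u' →
      ∀ t t' : Tableau (Fin n), Models (starG n) (iNodes val) none u t →
        Models (starG n) (iNodes val) none u' t' → t ≠ t') ∧
    ∀ (T : Set (Tableau (Fin n))) (hT : T.Finite),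
      (∀ u : List ℕ,
        ((ntSeq (starG n) (starG n).start u).isSome = true ∧
          ∀ i : ℕ, ¬ (ntSeq (starG n) (starG n).start (u ++ [i])).isSome = true) →
        ∃ t ∈ T, Models (starG n) (iNodes val) none u t) →
      2 ^ n ≤ hT.toFinset.card :=
  stmt16_general n val

end Statements
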